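/- arXiv:1808.02520 — 3 statements merged into one kernel-verified Lean document; each statement's English description precedes it below -/
import Mathlib

section
/- Let L be a positive linear functional on continuous functions on [0,∞) with L(1) = 1 and L(t) = x for a fixed x > 0, and suppose L((t−x)^2) ≤ δ^2. Then for any f satisfying |f(t) − f(x)| ≤ M |t−x|^γ / (t+x)^{γ/2} for all t ≥ 0, with 0 < γ ≤ 1 and M > 0, one has |L(f) − f(x)| ≤ M (δ^2/x)^{γ/2}. -/
/-- Young-type inequality: for `a ≥ 0`, `l > 0`, `0 < θ ≤ 1`,
`a ^ θ ≤ θ * l ^ (θ - 1) * a + (1 - θ) * l ^ θ`. -/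
lemma young_aux (a l θ : ℝ) (ha : 0 ≤ a) (hl : 0 < l) (hθ : 0 < θ) (hθ1 : θ ≤ 1) :
    a ^ θ ≤ θ * l ^ (θ - 1) * a + (1 - θ) * l ^ θ := by
  have h := Real.geom_mean_le_arith_mean2_weighted (w₁ := θ) (w₂ := 1 - θ)
    (p₁ := a / l) (p₂ := 1) (le_of_lt hθ) (by linarith)
    (div_nonneg ha hl.le) zero_le_one (by ring)
  rw [Real.one_rpow, mul_one] at h
  have hlp : 0 < l ^ θ := Real.rpow_pos_of_pos hl θ
  have h2 : l ^ θ * ((a / l) ^ θ) ≤ l ^ θ * (θ * (a / l) + (1 - θ) * 1) :=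
    mul_le_mul_of_nonneg_left h hlp.le
  have hdiv : (a / l) ^ θ = a ^ θ / l ^ θ := Real.div_rpow ha hl.le θ
  have hsub : l ^ (θ - 1) = l ^ θ / l := by
    rw [Real.rpow_sub hl, Real.rpow_one]
  rw [hdiv] at h2
  have hL : l ^ θ * (a ^ θ / l ^ θ) = a ^ θ := by field_simp
  rw [hL] at h2
  calc a ^ θ ≤ l ^ θ * (θ * (a / l) + (1 - θ) * 1) := h2
    _ = θ * (l ^ θ / l) * a + (1 - θ) * l ^ θ := by field_simp
    _ = θ * l ^ (θ - 1) * a + (1 - θ) * l ^ θ := by rw [hsub]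

theorem stmt_2 (L : (ℝ → ℝ) →ₗ[ℝ] ℝ) (x : ℝ) (hx : 0 < x)
    (hpos : ∀ g h : ℝ → ℝ, (∀ t, 0 ≤ t → g t ≤ h t) → L g ≤ L h)
    (h1 : L (fun _ => 1) = 1) (hid : L (fun t => t) = x)
    (δ M γ : ℝ) (hδ : 0 < δ) (hγ : 0 < γ) (hγ1 : γ ≤ 1) (hM : 0 < M)
    (hmom : L (fun t => (t - x) ^ 2) ≤ δ ^ 2)
    (f : ℝ → ℝ)
    (hf : ∀ t, 0 ≤ t → |f t - f x| ≤ M * |t - x| ^ γ / (t + x) ^ (γ / 2)) :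
    |L f - f x| ≤ M * (δ ^ 2 / x) ^ (γ / 2) := by
  have hδ2 : (0:ℝ) < δ ^ 2 := by positivity
  set c1 : ℝ := γ / 2 * (δ ^ 2) ^ (γ / 2 - 1) with hc1
  set c2 : ℝ := (1 - γ / 2) * (δ ^ 2) ^ (γ / 2) with hc2
  set K : ℝ := M / x ^ (γ / 2) with hK
  have hxp : (0:ℝ) < x ^ (γ / 2) := Real.rpow_pos_of_pos hx _
  have hKpos : 0 < K := div_pos hM hxp
  set g : ℝ → ℝ := fun t => K * (c1 * (t - x) ^ 2 + c2) with hg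
  -- pointwise bound
  have key : ∀ t, 0 ≤ t → |f t - f x| ≤ g t := by
    intro t ht
    have htx : x ^ (γ / 2) ≤ (t + x) ^ (γ / 2) :=
      Real.rpow_le_rpow hx.le (by linarith) (by linarith)
    have habs : (0:ℝ) ≤ M * |t - x| ^ γ := by positivity
    have step1 : M * |t - x| ^ γ / (t + x) ^ (γ / 2) ≤ M * |t - x| ^ γ / x ^ (γ / 2) :=
      div_le_div_of_nonneg_left habs hxp htx
    have hrw : |t - x| ^ γ = ((t - x) ^ 2) ^ (γ / 2) := by
      rw [← sq_abs, ← Real.rpow_natCast |t - x| 2, ← Real.rpow_mul (abs_nonneg _)]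
      congr 1
      push_cast
      ring
    have hy := young_aux ((t - x) ^ 2) (δ ^ 2) (γ / 2) (by positivity) hδ2
      (by linarith) (by linarith)
    rw [← hc1, ← hc2] at hy
    have step2 : M * ((t - x) ^ 2) ^ (γ / 2) / x ^ (γ / 2) ≤ g t := by
      have h2 := mul_le_mul_of_nonneg_left hy hKpos.le
      calc M * ((t - x) ^ 2) ^ (γ / 2) / x ^ (γ / 2)
          = K * (((t - x) ^ 2) ^ (γ / 2)) := by rw [hK]; ring
        _ ≤ K * (c1 * (t - x) ^ 2 + c2) := h2
        _ = g t := rfl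
    calc |f t - f x| ≤ M * |t - x| ^ γ / (t + x) ^ (γ / 2) := hf t ht
      _ ≤ M * |t - x| ^ γ / x ^ (γ / 2) := step1
      _ = M * ((t - x) ^ 2) ^ (γ / 2) / x ^ (γ / 2) := by rw [hrw]
      _ ≤ g t := step2
  -- linearity computations
  have hLg : L g = K * (c1 * L (fun t => (t - x) ^ 2) + c2) := by
    set u : ℝ → ℝ := fun t => (t - x) ^ 2 with hu
    set v : ℝ → ℝ := fun _ => (1:ℝ) with hv
    have hgeq : g = (K * c1) • u + (K * c2) • v := by
      funext t
      simp only [Pi.add_apply, Pi.smul_apply, smul_eq_mul, hg, hu, hv]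
      ring
    rw [hgeq, map_add, map_smul, map_smul, smul_eq_mul, smul_eq_mul, hv, h1]
    ring
  have hLF : L (f - fun _ => f x) = L f - f x := by
    have hconst : (fun _ : ℝ => f x) = f x • (fun _ : ℝ => (1:ℝ)) := by
      funext t; simp [smul_eq_mul]
    rw [map_sub, hconst, map_smul, smul_eq_mul, h1, mul_one]
  have hub : L (f - fun _ => f x) ≤ L g := by
    apply hpos
    intro t ht
    have h' := abs_le.mp (key t ht)
    simp only [Pi.sub_apply]
    linarith [h'.2]
  have hlb : -(L (f - fun _ => f x)) ≤ L g := by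
    rw [← map_neg]
    apply hpos
    intro t ht
    have h' := abs_le.mp (key t ht)
    simp only [Pi.neg_apply, Pi.sub_apply]
    linarith [h'.1]
  have habsL : |L f - f x| ≤ L g := by
    rw [← hLF]
    exact abs_le.mpr ⟨by linarith, hub⟩
  have hc1pos : 0 ≤ c1 := by rw [hc1]; positivity
  have hLg_le : L g ≤ K * (c1 * δ ^ 2 + c2) := by
    rw [hLg]
    apply mul_le_mul_of_nonneg_left _ hKpos.le
    have := mul_le_mul_of_nonneg_left hmom hc1pos
    linarith
  have hfinal : K * (c1 * δ ^ 2 + c2) = M * (δ ^ 2 / x) ^ (γ / 2) := by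
    have h3 : c1 * δ ^ 2 + c2 = (δ ^ 2) ^ (γ / 2) := by
      rw [hc1, hc2, Real.rpow_sub hδ2, Real.rpow_one]
      field_simp
      ring
    rw [h3, hK, Real.div_rpow (by positivity) hx.le]
    field_simp
  linarith [le_trans habsL hLg_le]
end

section
/- Let g : [0,∞) → ℝ be locally absolutely continuous with ‖φ^β g'‖_∞ < ∞, where φ(u) = √(u(1+cu)), c ≥ 0, 0 ≤ β ≤ 1. Then for all t, x > 0, |g(t) − g(x)| ≤ ‖φ^β g'‖_∞ · |t − x|^{1−β} · |∫_x^t du/φ(u)|^β. -/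
open MeasureTheory intervalIntegral Set
open scoped Interval

/-!
Writing `M ≥ φ^β |g'|` as `|g'| ≤ M (1/φ)^β`, integrate over the interval between `x` and `t`.
Jensen's inequality for the concave map `s ↦ s^β` (equivalently, Hölder with exponents
`1/(1-β)` and `1/β`) gives `∫ (1/φ)^β ≤ |t - x|^(1-β) (∫ 1/φ)^β`.
-/

theorem setIntegral_rpow_le_measureReal_rpow_mul {α : Type*} [MeasurableSpace α] {μ : Measure α}
    {s : Set α} {f : α → ℝ} {β : ℝ} (hβ0 : 0 ≤ β) (hβ1 : β ≤ 1) (hs : μ s ≠ ⊤)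
    (hf_nonneg : ∀ᵐ x ∂μ.restrict s, 0 ≤ f x) (hf : IntegrableOn f s μ) :
    ∫ x in s, f x ^ β ∂μ ≤ μ.real s ^ (1 - β) * (∫ x in s, f x ∂μ) ^ β := by
  have hrhs : 0 ≤ μ.real s ^ (1 - β) * (∫ x in s, f x ∂μ) ^ β := by
    have := integral_nonneg_of_ae hf_nonneg
    positivity
  by_cases hfβ : IntegrableOn (fun x => f x ^ β) s μ
  swap
  · rwa [integral_undef hfβ]
  by_cases hs0 : μ s = 0
  · rwa [setIntegral_measure_zero _ hs0]
  have hm : 0 < μ.real s := ENNReal.toReal_pos hs0 hs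
  have jensen := (Real.concaveOn_rpow hβ0 hβ1).le_map_set_average
    (Real.continuous_rpow_const hβ0).continuousOn isClosed_Ici hs0 hs hf_nonneg hf hfβ
  rw [setAverage_eq, setAverage_eq, smul_eq_mul, smul_eq_mul,
    Real.mul_rpow (inv_nonneg.mpr hm.le) (integral_nonneg_of_ae hf_nonneg),
    Real.inv_rpow hm.le, ← div_eq_inv_mul, div_le_iff₀ hm] at jensen
  calc ∫ x in s, f x ^ β ∂μ ≤ (μ.real s ^ β)⁻¹ * (∫ x in s, f x ∂μ) ^ β * μ.real s := jensen
    _ = μ.real s ^ (1 - β) * (∫ x in s, f x ∂μ) ^ β := by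
      rw [Real.rpow_sub hm, Real.rpow_one]; ring

theorem abs_intervalIntegral_le_of_rpow_mul_abs_le {f φ : ℝ → ℝ} {a b β M : ℝ}
    (hβ0 : 0 ≤ β) (hβ1 : β ≤ 1) (hf : IntervalIntegrable f volume a b)
    (hφ_cont : ContinuousOn φ (uIcc a b)) (hφ_pos : ∀ u ∈ uIcc a b, 0 < φ u)
    (hM : ∀ u ∈ uIcc a b, φ u ^ β * |f u| ≤ M) :
    |∫ u in a..b, f u| ≤ M * |b - a| ^ (1 - β) * |∫ u in a..b, 1 / φ u| ^ β := by
  have hM0 : 0 ≤ M := by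
    have := hφ_pos a left_mem_uIcc
    exact (by positivity : 0 ≤ φ a ^ β * |f a|).trans (hM a left_mem_uIcc)
  have hw_cont : ContinuousOn (fun u => 1 / φ u) (uIcc a b) :=
    continuousOn_const.div hφ_cont fun u hu => (hφ_pos u hu).ne'
  have hw_int : IntegrableOn (fun u => 1 / φ u) (Ι a b) :=
    (hw_cont.integrableOn_compact isCompact_uIcc).mono_set uIoc_subset_uIcc
  have hw_nonneg : ∀ u ∈ Ι a b, 0 ≤ 1 / φ u := fun u hu =>
    (one_div_pos.mpr (hφ_pos u (uIoc_subset_uIcc hu))).le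
  have hMw_int : IntegrableOn (fun u => M * (1 / φ u) ^ β) (Ι a b) :=
    ((continuousOn_const.mul (hw_cont.rpow_const fun _ _ => Or.inr hβ0)).integrableOn_compact
      isCompact_uIcc).mono_set uIoc_subset_uIcc
  have hf_le : ∀ u ∈ Ι a b, |f u| ≤ M * (1 / φ u) ^ β := fun u hu => by
    have hφu := hφ_pos u (uIoc_subset_uIcc hu)
    rw [Real.div_rpow zero_le_one hφu.le, Real.one_rpow, ← div_eq_mul_one_div,
      le_div_iff₀ (by positivity), mul_comm]
    exact hM u (uIoc_subset_uIcc hu)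
  calc |∫ u in a..b, f u|
    _ ≤ ∫ u in Ι a b, |f u| := by
      simpa only [Real.norm_eq_abs] using norm_integral_le_integral_norm_uIoc (f := f) (μ := volume)
    _ ≤ ∫ u in Ι a b, M * (1 / φ u) ^ β :=
      setIntegral_mono_on hf.def'.abs hMw_int measurableSet_uIoc hf_le
    _ = M * ∫ u in Ι a b, (1 / φ u) ^ β := integral_const_mul M _
    _ ≤ M * (volume.real (Ι a b) ^ (1 - β) * (∫ u in Ι a b, 1 / φ u) ^ β) := by
      gcongr
      exact setIntegral_rpow_le_measureReal_rpow_mul hβ0 hβ1 (by simp [Real.volume_uIoc])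
        ((ae_restrict_iff' measurableSet_uIoc).mpr (ae_of_all _ hw_nonneg)) hw_int
    _ = M * |b - a| ^ (1 - β) * |∫ u in a..b, 1 / φ u| ^ β := by
      rw [abs_integral_eq_abs_integral_uIoc, abs_of_nonneg (setIntegral_nonneg measurableSet_uIoc
        hw_nonneg), measureReal_def, Real.volume_uIoc, ENNReal.toReal_ofReal (abs_nonneg _),
        mul_assoc]

theorem stmt_17 (c β : ℝ) (hc : 0 ≤ c) (hβ0 : 0 ≤ β) (hβ1 : β ≤ 1)
    (g g' : ℝ → ℝ) (M : ℝ)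
    (hint : ∀ x t : ℝ, 0 < x → 0 < t → IntervalIntegrable g' volume x t)
    (hftc : ∀ x t : ℝ, 0 < x → 0 < t → g t - g x = ∫ u in x..t, g' u)
    (hM : ∀ u : ℝ, 0 < u → Real.sqrt (u * (1 + c * u)) ^ β * |g' u| ≤ M)
    (t x : ℝ) (ht : 0 < t) (hx : 0 < x) :
    |g t - g x| ≤ M * |t - x| ^ (1 - β) *
      |∫ u in x..t, 1 / Real.sqrt (u * (1 + c * u))| ^ β := by
  have hpos : ∀ u ∈ uIcc x t, 0 < u := fun u hu => lt_of_lt_of_le (lt_min hx ht) hu.1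
  rw [hftc x t hx ht]
  refine abs_intervalIntegral_le_of_rpow_mul_abs_le hβ0 hβ1 (hint x t hx ht) (by fun_prop)
    (fun u hu => ?_) (fun u hu => hM u (hpos u hu))
  have := hpos u hu
  positivity
end

section
/- Let h : [0,∞) → ℝ be of bounded variation on compact subintervals with h(x) = 0 at a fixed point x > 0, and suppose K : [0, x] → [0,1] satisfies K(t) ≤ A/(x−t)^2 for 0 ≤ t ≤ x − x/√n (with A > 0, n ≥ 1). Then |∫_0^x K(t) h(t) dt| ≤ (A/x) ∑_{k=1}^{⌊√n⌋} V_{x−x/k}^x(h) + (x/√n) V_{x−x/√n}^x(h), where V_a^b(h) denotes the total variation of h on [a,b]. -/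
open MeasureTheory

/-- Total variation of `h` on `[a, b]` (as a real number). -/
noncomputable def totalVar (h : ℝ → ℝ) (a b : ℝ) : ℝ :=
  (eVariationOn h (Set.Icc a b)).toReal

/-!
Since `h x = 0`, every `t ∈ [a, x]` satisfies `|h t| = |h t - h x| ≤ V_a^x(h)`. On `[x - x/√n, x]`
use `K ≤ 1`. Cut `[0, x - x/√n]` at the points `x - x/k`, `1 ≤ k ≤ ⌊√n⌋`: on the piece starting
at `x - x/k`, `|K h| ≤ A V_{x-x/k}^x(h) / (x - t)²`, and `∫ (x - t)⁻² dt` is the increment of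
`(x - t)⁻¹ = u / x` with `u = x / (x - t)`; on each piece `u` grows by at most one.
-/

lemma abs_sub_le_totalVar {h : ℝ → ℝ} {a b t u : ℝ} (hfin : eVariationOn h (Set.Icc a b) ≠ ⊤)
    (ht : t ∈ Set.Icc a b) (hu : u ∈ Set.Icc a b) : |h t - h u| ≤ totalVar h a b := by
  rw [← Real.dist_eq, dist_edist]
  exact ENNReal.toReal_mono hfin (eVariationOn.edist_le h ht hu)

lemma sub_pos_of_mem_uIcc {x b e t : ℝ} (hbe : b ≤ e) (hex : e < x) (ht : t ∈ Set.uIcc b e) :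
    0 < x - t := by
  rw [Set.uIcc_of_le hbe] at ht
  linarith [ht.2]

lemma intervalIntegrable_div_sub_sq {x b e : ℝ} (B : ℝ) (hbe : b ≤ e) (hex : e < x) :
    IntervalIntegrable (fun t => B / (x - t) ^ 2) volume b e :=
  (continuousOn_const.div (by fun_prop) fun t ht =>
    (pow_pos (sub_pos_of_mem_uIcc hbe hex ht) 2).ne').intervalIntegrable

lemma integral_div_sub_sq {x b e : ℝ} (B : ℝ) (hbe : b ≤ e) (hex : e < x) :
    ∫ t in b..e, B / (x - t) ^ 2 = B / (x - e) - B / (x - b) := by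
  have hderiv : ∀ t ∈ Set.uIcc b e, HasDerivAt (fun u => B * (x - u)⁻¹) (B / (x - t) ^ 2) t :=
    fun t ht => ((((hasDerivAt_id t).const_sub x).inv
      (sub_pos_of_mem_uIcc hbe hex ht).ne').const_mul B).congr_deriv (by simp [div_eq_mul_inv])
  rw [intervalIntegral.integral_eq_sub_of_hasDerivAt hderiv
    (intervalIntegrable_div_sub_sq B hbe hex), div_eq_mul_inv, div_eq_mul_inv]

lemma abs_integral_le_of_abs_le_div_sq {f : ℝ → ℝ} {x c c' B : ℝ} (hx : 0 < x) (hc : 0 < c)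
    (hcc' : c ≤ c') (hf : ∀ t ∈ Set.Ioc (x - x / c) (x - x / c'), |f t| ≤ B / (x - t) ^ 2) :
    |∫ t in (x - x / c)..(x - x / c'), f t| ≤ B * (c' - c) / x := by
  have hle : x - x / c ≤ x - x / c' := by gcongr
  have hlt : x - x / c' < x := sub_lt_self x (div_pos hx (hc.trans_le hcc'))
  calc |∫ t in (x - x / c)..(x - x / c'), f t|
      = ‖∫ t in (x - x / c)..(x - x / c'), f t‖ := (Real.norm_eq_abs _).symm
    _ ≤ ∫ t in (x - x / c)..(x - x / c'), B / (x - t) ^ 2 :=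
        intervalIntegral.norm_integral_le_of_norm_le hle (Filter.Eventually.of_forall hf)
          (intervalIntegrable_div_sub_sq B hle hlt)
    _ = B * (c' - c) / x := by
        rw [integral_div_sub_sq B hle hlt, sub_sub_cancel, sub_sub_cancel]
        field_simp

lemma abs_integral_le_sum_of_abs_le_div_sq {f : ℝ → ℝ} {x s C : ℝ} {V : ℕ → ℝ}
    (hx : 0 < x) (hs : 1 ≤ s) (hC : 0 ≤ C) (hV : ∀ k, 0 ≤ V k)
    (hf : ∀ k ∈ Finset.Icc 1 ⌊s⌋₊, ∀ t ∈ Set.Icc (x - x / k) (x - x / s),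
      |f t| ≤ C * V k / (x - t) ^ 2)
    (hint : IntervalIntegrable f volume 0 (x - x / s)) :
    |∫ t in (0 : ℝ)..(x - x / s), f t| ≤ C / x * ∑ k ∈ Finset.Icc 1 ⌊s⌋₊, V k := by
  set m := ⌊s⌋₊
  have hms : (m : ℝ) ≤ s := Nat.floor_le (by linarith)
  -- breakpoints `x - x / c i`: `x - x / (i + 1)` for `i < m`, then `x - x / s`
  set c : ℕ → ℝ := fun i => min ((i : ℝ) + 1) s with hc
  have hc_one : ∀ i, 1 ≤ c i := fun i => le_min (by simp) hs
  have hc_lt : ∀ i < m, c i = i + 1 := fun i hi =>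
    min_eq_left (le_trans (by exact_mod_cast hi) hms)
  have hc_zero : c 0 = 1 := by simpa using hc_lt 0 (Nat.floor_pos.mpr hs)
  have hc_m : c m = s := min_eq_right (Nat.lt_floor_add_one s).le
  have hbreak_le : ∀ i, x - x / c i ≤ x - x / s := fun i => by
    gcongr
    exact min_le_right _ _
  have hbreak_nonneg : ∀ i, 0 ≤ x - x / c i := fun i =>
    sub_nonneg.mpr (div_le_self hx.le (hc_one i))
  have hsum : ∑ i ∈ Finset.range m, ∫ t in (x - x / c i)..(x - x / c (i + 1)), f t =
      ∫ t in (x - x / c 0)..(x - x / c m), f t :=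
    intervalIntegral.sum_integral_adjacent_intervals fun i _ => hint.mono_set <|
      Set.uIcc_subset_uIcc (Set.mem_uIcc_of_le (hbreak_nonneg _) (hbreak_le _))
        (Set.mem_uIcc_of_le (hbreak_nonneg _) (hbreak_le _))
  rw [hc_zero, hc_m, div_one, sub_self] at hsum
  have hpiece : ∀ i < m,
      |∫ t in (x - x / c i)..(x - x / c (i + 1)), f t| ≤ C / x * V (i + 1) := by
    intro i hi
    have hstep : c i ≤ c (i + 1) ∧ c (i + 1) ≤ c i + 1 := by
      have hnext : c (i + 1) = min ((i : ℝ) + 1 + 1) s := by simp [hc]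
      rw [hc_lt i hi, hnext]
      exact ⟨le_min (by linarith) (le_trans (by exact_mod_cast hi) hms), min_le_left _ _⟩
    have hf' : ∀ t ∈ Set.Ioc (x - x / c i) (x - x / c (i + 1)),
        |f t| ≤ C * V (i + 1) / (x - t) ^ 2 := fun t ht =>
      hf (i + 1) (Finset.mem_Icc.mpr ⟨by omega, by omega⟩) t
        ⟨by simpa [hc_lt i hi] using ht.1.le, ht.2.trans (hbreak_le _)⟩
    calc |∫ t in (x - x / c i)..(x - x / c (i + 1)), f t|
        ≤ C * V (i + 1) * (c (i + 1) - c i) / x :=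
          abs_integral_le_of_abs_le_div_sq hx (zero_lt_one.trans_le (hc_one i)) hstep.1 hf'
      _ ≤ C * V (i + 1) * 1 / x := by
          gcongr
          · exact mul_nonneg hC (hV _)
          · linarith [hstep.2]
      _ = C / x * V (i + 1) := by ring
  calc |∫ t in (0 : ℝ)..(x - x / s), f t|
      = |∑ i ∈ Finset.range m, ∫ t in (x - x / c i)..(x - x / c (i + 1)), f t| := by rw [hsum]
    _ ≤ ∑ i ∈ Finset.range m, |∫ t in (x - x / c i)..(x - x / c (i + 1)), f t| :=
        Finset.abs_sum_le_sum_abs _ _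
    _ ≤ ∑ i ∈ Finset.range m, C / x * V (i + 1) :=
        Finset.sum_le_sum fun i hi => hpiece i (Finset.mem_range.mp hi)
    _ = C / x * ∑ k ∈ Finset.Icc 1 m, V k := by
        rw [← Finset.mul_sum, Finset.range_eq_Ico, Finset.sum_Ico_add',
          ← Finset.Ico_add_one_right_eq_Icc, zero_add]

theorem stmt_19 (h : ℝ → ℝ) (x A : ℝ) (n : ℕ) (hx : 0 < x) (hA : 0 < A)
    (hn : 1 ≤ n)
    (hBV : ∀ a b : ℝ, 0 ≤ a → a ≤ b → eVariationOn h (Set.Icc a b) ≠ ⊤)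
    (hhx : h x = 0)
    (K : ℝ → ℝ)
    (hK0 : ∀ t : ℝ, 0 ≤ t → t ≤ x → 0 ≤ K t)
    (hK1 : ∀ t : ℝ, 0 ≤ t → t ≤ x → K t ≤ 1)
    (hKdecay : ∀ t : ℝ, 0 ≤ t → t ≤ x - x / Real.sqrt n → K t ≤ A / (x - t) ^ 2)
    (hInt : IntervalIntegrable (fun t => K t * h t) volume 0 x) :
    |∫ t in (0 : ℝ)..x, K t * h t| ≤
      (A / x) * ∑ k ∈ Finset.Icc 1 ⌊Real.sqrt n⌋₊, totalVar h (x - x / k) x +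
        (x / Real.sqrt n) * totalVar h (x - x / Real.sqrt n) x := by
  set s := Real.sqrt n
  have hs : 1 ≤ s := Real.one_le_sqrt.mpr (by exact_mod_cast hn)
  set y := x - x / s
  have hy0 : 0 ≤ y := sub_nonneg.mpr (div_le_self hx.le hs)
  have hyx : y ≤ x := sub_le_self _ (by positivity)
  have habs_h : ∀ a t, 0 ≤ a → a ≤ t → t ≤ x → |h t| ≤ totalVar h a x := fun a t ha hat htx => by
    simpa [hhx] using
      abs_sub_le_totalVar (hBV a x ha (hat.trans htx)) ⟨hat, htx⟩ ⟨hat.trans htx, le_rfl⟩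
  have hhead : |∫ t in (0 : ℝ)..y, K t * h t| ≤
      (A / x) * ∑ k ∈ Finset.Icc 1 ⌊s⌋₊, totalVar h (x - x / k) x := by
    refine abs_integral_le_sum_of_abs_le_div_sq hx hs hA.le (fun _ => ENNReal.toReal_nonneg)
      (fun k hk t ht => ?_) (hInt.mono_set (Set.uIcc_subset_uIcc_left (Set.mem_uIcc_of_le hy0 hyx)))
    have hk : (1 : ℝ) ≤ k := by exact_mod_cast (Finset.mem_Icc.mp hk).1
    have hak : 0 ≤ x - x / k := sub_nonneg.mpr (div_le_self hx.le hk)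
    have ht0 : 0 ≤ t := hak.trans ht.1
    have htx : t ≤ x := ht.2.trans hyx
    rw [abs_mul, abs_of_nonneg (hK0 t ht0 htx), mul_div_right_comm]
    exact mul_le_mul (hKdecay t ht0 ht.2) (habs_h _ t hak ht.1 htx) (abs_nonneg _)
      (by positivity)
  have htail : |∫ t in y..x, K t * h t| ≤ x / s * totalVar h y x := by
    have hbound : ∀ t ∈ Set.uIoc y x, ‖K t * h t‖ ≤ totalVar h y x := fun t ht => by
      rw [Set.uIoc_of_le hyx] at ht
      have ht0 : 0 ≤ t := hy0.trans ht.1.le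
      rw [Real.norm_eq_abs, abs_mul, abs_of_nonneg (hK0 t ht0 ht.2), ← one_mul (totalVar h y x)]
      exact mul_le_mul (hK1 t ht0 ht.2) (habs_h y t hy0 ht.1.le ht.2) (abs_nonneg _) zero_le_one
    have hxy : |x - y| = x / s := by rw [sub_sub_cancel, abs_of_pos (by positivity)]
    simpa only [Real.norm_eq_abs, hxy, mul_comm] using
      intervalIntegral.norm_integral_le_of_norm_le_const hbound
  rw [← intervalIntegral.integral_add_adjacent_intervals
    (hInt.mono_set (Set.uIcc_subset_uIcc_left (Set.mem_uIcc_of_le hy0 hyx)))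
    (hInt.mono_set (Set.uIcc_subset_uIcc_right (Set.mem_uIcc_of_le hy0 hyx)))]
  exact (abs_add_le _ _).trans (add_le_add hhead htail)
end
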